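/- Let A be a non-empty finite subset of ℤ. For every x ∈ ℤ, the quantity g_A(x,y) + a(x−y) − E_x[a(S_{σ_A} − y)] is independent of y ∈ ℤ; in particular, for any ξ0 ∈ A it equals a†(x−ξ0) − E_x[a(S_{σ_A} − ξ0)]. -/

import Mathlib

open Filter
open scoped Topology Classical

noncomputable section

/-- `convP p n x` : the `n`-step transition probability `P₀[Sₙ = x]` of the random walk
with step distribution `p`. -/
def convP (p : ℤ → ℝ) : ℕ → ℤ → ℝ
  | 0, x => if x = 0 then 1 else 0
  | n + 1, x => ∑' z : ℤ, convP p n z * p (x - z)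

/-- `kp p A n x y = P_x[Sₖ ∉ A for 1 ≤ k ≤ n, Sₙ = y]` : the transition probability of the
walk killed upon entering `A`. -/
def kp (p : ℤ → ℝ) (A : Set ℤ) : ℕ → ℤ → ℤ → ℝ
  | 0, x, y => if x = y then 1 else 0
  | n + 1, x, y => ∑' z : ℤ, if z ∈ A then 0 else p (z - x) * kp p A n z y

/-- The Green function `g_A(x,y) = Σ_n p_A^n(x,y)` of the killed walk. -/
def greenFn (p : ℤ → ℝ) (A : Set ℤ) (x y : ℤ) : ℝ := ∑' n : ℕ, kp p A n x y

/-- `hitAt p A n x ξ = P_x[σ_A = n, S_{σ_A} = ξ]`. -/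
def hitAt (p : ℤ → ℝ) (A : Set ℤ) : ℕ → ℤ → ℤ → ℝ
  | 0, _, _ => 0
  | n + 1, x, ξ => if ξ ∈ A then ∑' w : ℤ, kp p A n x w * p (ξ - w) else 0

/-- `hitDist p A x ξ = P_x[S_{σ_A} = ξ]`, where `σ_A` is the first entrance time into `A`. -/
def hitDist (p : ℤ → ℝ) (A : Set ℤ) (x ξ : ℤ) : ℝ := ∑' n : ℕ, hitAt p A n x ξ

/-- `probHitAt p A n x = P_x[σ_A = n]`. -/
def probHitAt (p : ℤ → ℝ) (A : Set ℤ) (n : ℕ) (x : ℤ) : ℝ := ∑' ξ : ℤ, hitAt p A n x ξ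

/-- `entBeforeAt p A B n x z = P_x[σ_B = n < σ_A, S_{σ_B} = z]`. -/
def entBeforeAt (p : ℤ → ℝ) (A B : Set ℤ) : ℕ → ℤ → ℤ → ℝ
  | 0, _, _ => 0
  | n + 1, x, z => if z ∈ B \ A then ∑' w : ℤ, kp p (A ∪ B) n x w * p (z - w) else 0

/-- `entBefore p A B x z = P_x[σ_B < σ_A, S_{σ_B} = z]`. -/
def entBefore (p : ℤ → ℝ) (A B : Set ℤ) (x z : ℤ) : ℝ := ∑' n : ℕ, entBeforeAt p A B n x z

/-- `probBefore p A B x = P_x[σ_B < σ_A]`. -/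
def probBefore (p : ℤ → ℝ) (A B : Set ℤ) (x : ℤ) : ℝ := ∑' z : ℤ, entBefore p A B x z

/-- The reflected set `-A = {-z : z ∈ A}`. -/
def negS (A : Set ℤ) : Set ℤ := {z : ℤ | -z ∈ A}

/-- `a†(x) = δ_{x,0} + a(x)`. -/
def adag (a : ℤ → ℝ) (x : ℤ) : ℝ := (if x = 0 then 1 else 0) + a x

/-- `a` is the potential function of the walk:
`a(x) = lim_n Σ_{k=0}^n [p^k(0) - p^k(-x)]`. -/
def IsPotential (p : ℤ → ℝ) (a : ℤ → ℝ) : Prop :=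
  ∀ x : ℤ,
    Tendsto (fun n : ℕ => ∑ k ∈ Finset.range (n + 1), (convP p k 0 - convP p k (-x)))
      atTop (𝓝 (a x))

/-- `expHit p A a x y = E_x[a(S_{σ_A} - y)]`. -/
def expHit (p : ℤ → ℝ) (A : Set ℤ) (a : ℤ → ℝ) (x y : ℤ) : ℝ :=
  ∑' ξ : ℤ, hitDist p A x ξ * a (ξ - y)

/-- The function `u_A(x) = a†(x-ξ0) - E_x[a(S_{σ_A} - ξ0)]`. -/
def uFn (p : ℤ → ℝ) (A : Set ℤ) (a : ℤ → ℝ) (ξ0 x : ℤ) : ℝ :=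
  adag a (x - ξ0) - expHit p A a x ξ0

/-- The interval `U(R) = {-R+1, …, R-1}`. -/
def Uset (R : ℕ) : Set ℤ := {z : ℤ | -(R : ℤ) < z ∧ z < (R : ℤ)}

/-- `escExp p A R x = E_x[S_{σ_{[R,∞)}} ; σ_{[R,∞)} < σ_A]`. -/
def escExp (p : ℤ → ℝ) (A : Set ℤ) (R : ℕ) (x : ℤ) : ℝ :=
  ∑' z : ℤ, (z : ℝ) * entBefore p A {w : ℤ | (R : ℤ) ≤ w} x z

/-- The Gaussian kernel `𝗀_t(u) = (2πvt)^{-1/2} e^{-u²/(2vt)}` with variance parameter `v`. -/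
def gaussK (v t u : ℝ) : ℝ := Real.exp (-(u ^ 2) / (2 * v * t)) / Real.sqrt (2 * Real.pi * v * t)

/-- A mean-zero, finite-variance, irreducible random walk on `ℤ`, described by the
distribution `p` of its i.i.d. increments. -/
structure RandomWalk where
  p : ℤ → ℝ
  nonneg : ∀ z : ℤ, 0 ≤ p z
  sum_one : HasSum p 1
  var : ℝ
  var_pos : 0 < var
  mean_zero : HasSum (fun z : ℤ => (z : ℝ) * p z) 0
  hasSum_var : HasSum (fun z : ℤ => (z : ℝ) ^ 2 * p z) var
  irred : ∀ x : ℤ, ∃ n : ℕ, 0 < n ∧ 0 < convP p n x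

/-!
Cutting a path at its first entrance into `A` gives, for the truncated sums,
`Σ_{n<N} p^n(y-x) = Σ_{n<N} p_A^n(x,y) + Σ_{ξ∈A} Σ_{j<N} h_{j+1}(ξ) Σ_{m<N-j-1} p^m(y-ξ)`
with `h_j(ξ) = P_x[σ_A = j, S_{σ_A} = ξ]`, so
`Σ_{n<N} p_A^n(x,y) + a_N(x-y) - Σ_{ξ∈A} Σ_{j<N} h_{j+1}(ξ) a_{N-j-1}(ξ-y)` does not depend on `y`,
where `a_N` are the partial sums defining `a`. The last term tends to
`E_x[a(S_{σ_A} - y)]` by dominated convergence, and for `y = ξ0 ∈ A` the Green sum is just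
`δ_{x,ξ0}`. So the common value converges, hence so do the Green partial sums for every `y`:
finiteness of `g_A` comes out of the identity, with no separate transience argument.
-/

open scoped ENNReal
open Finset

lemma sum_range_sum_range_sub_succ {M : Type*} [AddCommMonoid M] (f : ℕ → ℕ → M) (N : ℕ) :
    ∑ n ∈ range N, ∑ j ∈ range n, f j (n - (j + 1)) =
      ∑ j ∈ range N, ∑ m ∈ range (N - (j + 1)), f j m := by
  induction N with
  | zero => simp
  | succ N ih =>
    rw [sum_range_succ, ih, sum_range_succ _ N, Nat.sub_self, sum_range_zero, add_zero,
      ← sum_add_distrib]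
    refine sum_congr rfl fun j hj => ?_
    rw [show N + 1 - (j + 1) = N - (j + 1) + 1 by have := mem_range.1 hj; omega, sum_range_succ]

lemma tendsto_sum_range_mul_sub_succ {f b : ℕ → ℝ} {L : ℝ} (hf : Summable f)
    (hb : Tendsto b atTop (𝓝 L)) :
    Tendsto (fun N => ∑ j ∈ range N, f j * b (N - (j + 1))) atTop
      (𝓝 ((∑' j, f j) * L)) := by
  obtain ⟨B, hB⟩ := isBounded_iff_forall_norm_le.1 (Metric.isBounded_range_of_tendsto b hb)
  have hdom := tendsto_tsum_of_dominated_convergence (𝓕 := atTop)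
    (bound := fun j => ‖f j‖ * B)
    (f := fun N j => if j < N then f j * b (N - (j + 1)) else 0) (g := fun j => f j * L)
    (hf.norm.mul_right B) (fun j => ?_) (Eventually.of_forall fun N j => ?_)
  · rw [tsum_mul_right] at hdom
    refine hdom.congr fun N => ?_
    rw [tsum_eq_sum (s := range N) fun j hj => if_neg (by simpa using hj)]
    exact sum_congr rfl fun j hj => if_pos (mem_range.1 hj)
  · refine ((hb.comp (tendsto_sub_atTop_nat (j + 1))).const_mul (f j)).congr' ?_
    filter_upwards [eventually_gt_atTop j] with N hN
    simp [hN]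
  · split_ifs
    · rw [norm_mul]
      exact mul_le_mul_of_nonneg_left (hB _ (Set.mem_range_self _)) (norm_nonneg _)
    · simpa using
        mul_nonneg (norm_nonneg (f j)) ((norm_nonneg _).trans (hB _ (Set.mem_range_self 0)))

-- Extended-real copies of `convP`, `kp`, `hitAt`, in which sums can be exchanged freely.
def convE (q : ℤ → ℝ≥0∞) : ℕ → ℤ → ℝ≥0∞
  | 0, x => if x = 0 then 1 else 0
  | n + 1, x => ∑' z : ℤ, convE q n z * q (x - z)

def kpE (q : ℤ → ℝ≥0∞) (A : Set ℤ) : ℕ → ℤ → ℤ → ℝ≥0∞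
  | 0, x, y => if x = y then 1 else 0
  | n + 1, x, y => ∑' z : ℤ, if z ∈ A then 0 else q (z - x) * kpE q A n z y

def hitAtE (q : ℤ → ℝ≥0∞) (A : Set ℤ) : ℕ → ℤ → ℤ → ℝ≥0∞
  | 0, _, _ => 0
  | n + 1, x, ξ => if ξ ∈ A then ∑' w : ℤ, kpE q A n x w * q (ξ - w) else 0

section ENNRealKernels

variable {q : ℤ → ℝ≥0∞} {A : Set ℤ}

lemma convE_succ_sub (n : ℕ) (x y : ℤ) :
    convE q (n + 1) (y - x) = ∑' w : ℤ, convE q n (w - x) * q (y - w) := by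
  rw [convE, ← (Equiv.subRight x).tsum_eq]
  simp only [Equiv.subRight_apply, sub_sub_sub_cancel_right]

lemma kpE_succ_eq_ite_tsum (n : ℕ) (x y : ℤ) :
    kpE q A (n + 1) x y = if y ∈ A then 0 else ∑' w : ℤ, kpE q A n x w * q (y - w) := by
  induction n generalizing x y with
  | zero =>
    simp only [kpE]
    rw [tsum_eq_single y fun z hz => by simp [hz],
      tsum_eq_single x fun w hw => by simp [Ne.symm hw]]
    split_ifs <;> simp_all
  | succ n ih =>
    rw [kpE.eq_2]
    simp only [ih _ y]
    split_ifs with hy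
    · simp
    · simp only [kpE.eq_2]
      simp_rw [← ENNReal.tsum_mul_right]
      rw [ENNReal.tsum_comm]
      refine tsum_congr fun z => ?_
      split_ifs <;> simp [ENNReal.tsum_mul_left, mul_assoc]

lemma hitAtE_add_kpE_succ (n : ℕ) (x y : ℤ) :
    hitAtE q A (n + 1) x y + kpE q A (n + 1) x y = ∑' w : ℤ, kpE q A n x w * q (y - w) := by
  rw [hitAtE, kpE_succ_eq_ite_tsum]
  split_ifs <;> simp

lemma hitAtE_of_notMem (n : ℕ) (x : ℤ) {ξ : ℤ} (hξ : ξ ∉ A) : hitAtE q A n x ξ = 0 := by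
  cases n <;> simp [hitAtE, hξ]

lemma kpE_succ_of_mem (n : ℕ) (x : ℤ) {y : ℤ} (hy : y ∈ A) : kpE q A (n + 1) x y = 0 := by
  simp [kpE_succ_eq_ite_tsum, hy]

theorem convE_sub_eq_kpE_add_sum_hitAtE (n : ℕ) (x y : ℤ) :
    convE q n (y - x) = kpE q A n x y +
      ∑ j ∈ range n, ∑' ξ : ℤ,
        hitAtE q A (j + 1) x ξ * convE q (n - (j + 1)) (y - ξ) := by
  induction n generalizing y with
  | zero => simp [convE, kpE, sub_eq_zero, eq_comm]
  | succ n ih =>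
    have hlast :
        ∑' ξ : ℤ, hitAtE q A (n + 1) x ξ * convE q 0 (y - ξ) = hitAtE q A (n + 1) x y := by
      rw [tsum_eq_single y (fun ξ hξ => by simp [convE, sub_eq_zero, Ne.symm hξ])]
      simp [convE]
    have hmid : ∀ j ∈ range n, ∑' w : ℤ, (∑' ξ : ℤ, hitAtE q A (j + 1) x ξ *
        convE q (n - (j + 1)) (w - ξ)) * q (y - w) =
        ∑' ξ : ℤ, hitAtE q A (j + 1) x ξ * convE q (n + 1 - (j + 1)) (y - ξ) := by
      intro j hj
      have hnj : n + 1 - (j + 1) = n - (j + 1) + 1 := by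
        have := mem_range.mp hj; omega
      simp_rw [hnj, convE_succ_sub, ← ENNReal.tsum_mul_right, ← ENNReal.tsum_mul_left]
      rw [ENNReal.tsum_comm]
      simp only [mul_assoc]
    calc convE q (n + 1) (y - x)
        = ∑' w : ℤ, convE q n (w - x) * q (y - w) := convE_succ_sub n x y
      _ = ∑' w : ℤ, kpE q A n x w * q (y - w) + ∑ j ∈ range n, ∑' w : ℤ,
            (∑' ξ : ℤ, hitAtE q A (j + 1) x ξ * convE q (n - (j + 1)) (w - ξ)) *
              q (y - w) := by
          simp_rw [ih, add_mul, sum_mul]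
          rw [ENNReal.tsum_add, Summable.tsum_finsetSum (fun _ _ => ENNReal.summable)]
      _ = _ := by
          rw [← hitAtE_add_kpE_succ, sum_congr rfl hmid, sum_range_succ, Nat.sub_self, hlast]
          ring

lemma tsum_hitAtE_add_tsum_kpE_succ_le (hq : ∑' z : ℤ, q z ≤ 1) (n : ℕ) (x : ℤ) :
    ∑' ξ : ℤ, hitAtE q A (n + 1) x ξ + ∑' y : ℤ, kpE q A (n + 1) x y ≤
      ∑' w : ℤ, kpE q A n x w := by
  rw [← ENNReal.tsum_add]
  simp_rw [hitAtE_add_kpE_succ]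
  rw [ENNReal.tsum_comm]
  refine ENNReal.tsum_le_tsum fun w => ?_
  rw [ENNReal.tsum_mul_left, show ∑' y, q (y - w) = ∑' z, q z from (Equiv.subRight w).tsum_eq q]
  exact mul_le_of_le_one_right' hq

lemma sum_range_tsum_hitAtE_add_tsum_kpE_le_one (hq : ∑' z : ℤ, q z ≤ 1) (N : ℕ) (x : ℤ) :
    ∑ j ∈ range (N + 1), ∑' ξ : ℤ, hitAtE q A j x ξ + ∑' y : ℤ, kpE q A N x y ≤
      1 := by
  induction N with
  | zero => simp [hitAtE, kpE]
  | succ N ih =>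
    rw [sum_range_succ, add_assoc]
    exact (add_le_add_right (tsum_hitAtE_add_tsum_kpE_succ_le hq N x) _).trans ih

lemma tsum_tsum_hitAtE_le_one (hq : ∑' z : ℤ, q z ≤ 1) (x : ℤ) :
    ∑' j : ℕ, ∑' ξ : ℤ, hitAtE q A j x ξ ≤ 1 :=
  ENNReal.tsum_le_of_sum_range_le fun N =>
    (sum_le_sum_of_subset (range_subset_range.2 N.le_succ)).trans
      (le_self_add.trans (sum_range_tsum_hitAtE_add_tsum_kpE_le_one hq N x))

lemma hitAtE_le_one (hq : ∑' z : ℤ, q z ≤ 1) (n : ℕ) (x ξ : ℤ) :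
    hitAtE q A n x ξ ≤ 1 :=
  ((ENNReal.le_tsum ξ).trans (ENNReal.le_tsum n)).trans (tsum_tsum_hitAtE_le_one hq x)

lemma kpE_le_one (hq : ∑' z : ℤ, q z ≤ 1) (n : ℕ) (x y : ℤ) : kpE q A n x y ≤ 1 :=
  (ENNReal.le_tsum y).trans
    (le_add_self.trans (sum_range_tsum_hitAtE_add_tsum_kpE_le_one hq n x))

lemma convE_le_one (hq : ∑' z : ℤ, q z ≤ 1) (n : ℕ) (x : ℤ) : convE q n x ≤ 1 := by
  have h := convE_sub_eq_kpE_add_sum_hitAtE (A := ∅) (q := q) n 0 x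
  simp only [hitAtE_of_notMem _ _ (Set.notMem_empty _), zero_mul, tsum_zero, sum_const_zero,
    add_zero, sub_zero] at h
  exact h ▸ kpE_le_one hq n 0 x

end ENNRealKernels

section RealKernels

variable {p : ℤ → ℝ}

lemma tsum_ofReal_le_one (hp0 : ∀ z, 0 ≤ p z) (hp1 : HasSum p 1) :
    ∑' z : ℤ, (ENNReal.ofReal ∘ p) z ≤ 1 := by
  rw [Function.comp_def, ← ENNReal.ofReal_tsum_of_nonneg hp0 hp1.summable, hp1.tsum_eq,
    ENNReal.ofReal_one]

lemma convP_eq_toReal (hp0 : ∀ z, 0 ≤ p z) (hp1 : HasSum p 1) (n : ℕ) (x : ℤ) :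
    convP p n x = (convE (ENNReal.ofReal ∘ p) n x).toReal := by
  induction n generalizing x with
  | zero => simp only [convP, convE]; split_ifs <;> simp
  | succ n ih =>
    rw [convP, convE, ENNReal.tsum_toReal_eq fun z => ENNReal.mul_ne_top
      (ne_top_of_le_ne_top ENNReal.one_ne_top (convE_le_one (tsum_ofReal_le_one hp0 hp1) n z))
      (by simp)]
    simp [ih, ENNReal.toReal_ofReal (hp0 _)]

lemma kp_eq_toReal (hp0 : ∀ z, 0 ≤ p z) (hp1 : HasSum p 1) (A : Set ℤ) (n : ℕ) (x y : ℤ) :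
    kp p A n x y = (kpE (ENNReal.ofReal ∘ p) A n x y).toReal := by
  induction n generalizing x with
  | zero => simp only [kp, kpE]; split_ifs <;> simp
  | succ n ih =>
    rw [kp, kpE, ENNReal.tsum_toReal_eq fun z => by
      split_ifs
      exacts [ENNReal.zero_ne_top, ENNReal.mul_ne_top (by simp)
        (ne_top_of_le_ne_top ENNReal.one_ne_top (kpE_le_one (tsum_ofReal_le_one hp0 hp1) n z y))]]
    simp [ih, apply_ite ENNReal.toReal, ENNReal.toReal_ofReal (hp0 _)]

lemma hitAt_eq_toReal (hp0 : ∀ z, 0 ≤ p z) (hp1 : HasSum p 1) (A : Set ℤ) (n : ℕ)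
    (x ξ : ℤ) :
    hitAt p A n x ξ = (hitAtE (ENNReal.ofReal ∘ p) A n x ξ).toReal := by
  cases n with
  | zero => simp [hitAt, hitAtE]
  | succ n =>
    rw [hitAt, hitAtE, apply_ite ENNReal.toReal, ENNReal.tsum_toReal_eq fun w =>
      ENNReal.mul_ne_top
        (ne_top_of_le_ne_top ENNReal.one_ne_top (kpE_le_one (tsum_ofReal_le_one hp0 hp1) n x w))
      (by simp)]
    simp [kp_eq_toReal hp0 hp1, ENNReal.toReal_ofReal (hp0 _)]

lemma kp_nonneg (hp0 : ∀ z, 0 ≤ p z) (hp1 : HasSum p 1) (A : Set ℤ) (n : ℕ) (x y : ℤ) :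
    0 ≤ kp p A n x y :=
  kp_eq_toReal hp0 hp1 A n x y ▸ ENNReal.toReal_nonneg

lemma kp_succ_of_mem (hp0 : ∀ z, 0 ≤ p z) (hp1 : HasSum p 1) {A : Set ℤ} (n : ℕ) (x : ℤ)
    {y : ℤ} (hy : y ∈ A) : kp p A (n + 1) x y = 0 := by
  rw [kp_eq_toReal hp0 hp1, kpE_succ_of_mem n x hy, ENNReal.toReal_zero]

lemma summable_hitAt (hp0 : ∀ z, 0 ≤ p z) (hp1 : HasSum p 1) (A : Set ℤ) (x ξ : ℤ) :
    Summable fun n : ℕ => hitAt p A n x ξ := by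
  simp_rw [hitAt_eq_toReal hp0 hp1]
  refine ENNReal.summable_toReal (ne_top_of_le_ne_top ENNReal.one_ne_top ?_)
  exact (ENNReal.tsum_le_tsum fun n => ENNReal.le_tsum ξ).trans
    (tsum_tsum_hitAtE_le_one (tsum_ofReal_le_one hp0 hp1) x)

lemma hitAt_of_notMem {A : Set ℤ} (n : ℕ) (x : ℤ) {ξ : ℤ} (hξ : ξ ∉ A) :
    hitAt p A n x ξ = 0 := by
  cases n <;> simp [hitAt, hξ]

lemma convP_sub_eq_kp_add_sum_hitAt (hp0 : ∀ z, 0 ≤ p z) (hp1 : HasSum p 1) (A : Finset ℤ)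
    (n : ℕ) (x y : ℤ) :
    convP p n (y - x) = kp p A n x y +
      ∑ j ∈ range n, ∑ ξ ∈ A, hitAt p A (j + 1) x ξ * convP p (n - (j + 1)) (y - ξ) := by
  have hq := tsum_ofReal_le_one hp0 hp1
  have hfin : ∀ j m ξ,
      hitAtE (ENNReal.ofReal ∘ p) A j x ξ * convE (ENNReal.ofReal ∘ p) m (y - ξ) ≠ ⊤ :=
    fun j m ξ => ENNReal.mul_ne_top
      (ne_top_of_le_ne_top ENNReal.one_ne_top (hitAtE_le_one hq j x ξ))
      (ne_top_of_le_ne_top ENNReal.one_ne_top (convE_le_one hq m _))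
  have hfinset : ∀ j m, ∑' ξ : ℤ, hitAtE (ENNReal.ofReal ∘ p) A (j + 1) x ξ *
      convE (ENNReal.ofReal ∘ p) m (y - ξ) =
      ∑ ξ ∈ A, hitAtE (ENNReal.ofReal ∘ p) A (j + 1) x ξ * convE (ENNReal.ofReal ∘ p) m (y - ξ) :=
    fun j m => tsum_eq_sum fun ξ hξ => by
      rw [hitAtE_of_notMem _ _ (by simpa using hξ), zero_mul]
  simp only [convP_eq_toReal hp0 hp1, kp_eq_toReal hp0 hp1, hitAt_eq_toReal hp0 hp1]
  rw [convE_sub_eq_kpE_add_sum_hitAtE (A := A)]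
  simp_rw [hfinset]
  rw [ENNReal.toReal_add (ne_top_of_le_ne_top ENNReal.one_ne_top (kpE_le_one hq n x y))
    (ENNReal.sum_ne_top.2 fun j _ => ENNReal.sum_ne_top.2 fun ξ _ => hfin _ _ _)]
  simp [ENNReal.toReal_sum, hfin, ENNReal.toReal_mul]

lemma sum_range_convP_sub_eq (hp0 : ∀ z, 0 ≤ p z) (hp1 : HasSum p 1) (A : Finset ℤ)
    (N : ℕ) (x y : ℤ) :
    ∑ n ∈ range N, convP p n (y - x) = ∑ n ∈ range N, kp p A n x y +
      ∑ ξ ∈ A, ∑ j ∈ range N,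
        hitAt p A (j + 1) x ξ * ∑ m ∈ range (N - (j + 1)), convP p m (y - ξ) := by
  simp_rw [convP_sub_eq_kp_add_sum_hitAt hp0 hp1 A _ x y]
  rw [sum_add_distrib, sum_range_sum_range_sub_succ (fun j m => ∑ ξ ∈ A,
    hitAt p A (j + 1) x ξ * convP p m (y - ξ))]
  simp_rw [mul_sum]
  exact congrArg _ ((sum_congr rfl fun j _ => sum_comm).trans sum_comm)

def potApprox (p : ℤ → ℝ) (N : ℕ) (z : ℤ) : ℝ :=
  ∑ k ∈ range N, (convP p k 0 - convP p k (-z))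

lemma tendsto_potApprox {a : ℤ → ℝ} (ha : IsPotential p a) (z : ℤ) :
    Tendsto (fun N => potApprox p N z) atTop (𝓝 (a z)) :=
  (tendsto_add_atTop_iff_nat 1).1 (ha z)

def greenApprox (p : ℤ → ℝ) (A : Finset ℤ) (N : ℕ) (x y : ℤ) : ℝ :=
  ∑ n ∈ range N, kp p A n x y + potApprox p N (x - y) -
    ∑ ξ ∈ A, ∑ j ∈ range N, hitAt p A (j + 1) x ξ * potApprox p (N - (j + 1)) (ξ - y)

lemma greenApprox_eq (hp0 : ∀ z, 0 ≤ p z) (hp1 : HasSum p 1) (A : Finset ℤ) (N : ℕ)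
    (x y : ℤ) :
    greenApprox p A N x y = ∑ k ∈ range N, convP p k 0 -
      ∑ ξ ∈ A, ∑ j ∈ range N,
        hitAt p A (j + 1) x ξ * ∑ m ∈ range (N - (j + 1)), convP p m 0 := by
  have h := sum_range_convP_sub_eq hp0 hp1 A N x y
  simp only [greenApprox, potApprox, sum_sub_distrib, mul_sub, neg_sub] at h ⊢
  linarith

lemma tendsto_sum_hitAt_mul_potApprox (hp0 : ∀ z, 0 ≤ p z) (hp1 : HasSum p 1) (A : Finset ℤ)
    {a : ℤ → ℝ} (ha : IsPotential p a) (x y : ℤ) :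
    Tendsto (fun N => ∑ ξ ∈ A, ∑ j ∈ range N,
        hitAt p A (j + 1) x ξ * potApprox p (N - (j + 1)) (ξ - y))
      atTop (𝓝 (expHit p A a x y)) := by
  rw [expHit, tsum_eq_sum fun ξ hξ => by
    rw [hitDist, tsum_congr fun n => hitAt_of_notMem n x (by simpa using hξ), tsum_zero, zero_mul]]
  refine tendsto_finsetSum A fun ξ _ => ?_
  have hsum := summable_hitAt hp0 hp1 A x ξ
  have h0 : hitAt p A 0 x ξ = 0 := rfl
  rw [hitDist, hsum.tsum_eq_zero_add, h0, zero_add]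
  exact tendsto_sum_range_mul_sub_succ (f := fun j => hitAt p A (j + 1) x ξ)
    (b := fun m => potApprox p m (ξ - y)) ((summable_nat_add_iff 1).2 hsum)
    (tendsto_potApprox ha _)

lemma tendsto_greenApprox (hp0 : ∀ z, 0 ≤ p z) (hp1 : HasSum p 1) (A : Finset ℤ)
    {a : ℤ → ℝ} (ha : IsPotential p a) {x y : ℤ} {g : ℝ}
    (hg : HasSum (fun n => kp p A n x y) g) :
    Tendsto (fun N => greenApprox p A N x y) atTop (𝓝 (g + a (x - y) - expHit p A a x y)) :=
  (hg.tendsto_sum_nat.add (tendsto_potApprox ha _)).sub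
    (tendsto_sum_hitAt_mul_potApprox hp0 hp1 A ha x y)

theorem greenFn_add_sub_expHit_eq (hp0 : ∀ z, 0 ≤ p z) (hp1 : HasSum p 1) (A : Finset ℤ)
    {a : ℤ → ℝ} (ha : IsPotential p a) {ξ0 : ℤ} (hξ0 : ξ0 ∈ A) (x y : ℤ) :
    greenFn p A x y + a (x - y) - expHit p A a x y = adag a (x - ξ0) - expHit p A a x ξ0 := by
  have hkp0 : HasSum (fun n => kp p A n x ξ0) (if x - ξ0 = 0 then 1 else 0) := by
    convert hasSum_single 0 fun n hn => ?_
    · simp [kp, sub_eq_zero]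
    · obtain ⟨n, rfl⟩ := Nat.exists_eq_succ_of_ne_zero hn
      exact kp_succ_of_mem hp0 hp1 n x (Finset.mem_coe.2 hξ0)
  have hlim : Tendsto (fun N => greenApprox p A N x ξ0) atTop
      (𝓝 (adag a (x - ξ0) - expHit p A a x ξ0)) :=
    tendsto_greenApprox hp0 hp1 A ha hkp0
  have hkp : HasSum (fun n => kp p A n x y)
      (adag a (x - ξ0) - expHit p A a x ξ0 + expHit p A a x y - a (x - y)) := by
    rw [hasSum_iff_tendsto_nat_of_nonneg (kp_nonneg hp0 hp1 A · x y)]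
    refine ((hlim.add (tendsto_sum_hitAt_mul_potApprox hp0 hp1 A ha x y)).sub
      (tendsto_potApprox ha (x - y))).congr fun N => ?_
    rw [greenApprox_eq hp0 hp1, ← greenApprox_eq hp0 hp1 A N x y, greenApprox]
    ring
  rw [greenFn, hkp.tsum_eq]
  ring

end RealKernels

/-- Lemma 2.1: the quantity `g_A(x,y) + a(x-y) - E_x[a(S_{σ_A} - y)]` does not depend on
`y`, and for `ξ0 ∈ A` it equals `a†(x-ξ0) - E_x[a(S_{σ_A} - ξ0)]`. -/
theorem green_potential_identity
    (W : RandomWalk) (A : Finset ℤ) (hA : A.Nonempty)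
    (a : ℤ → ℝ) (ha : IsPotential W.p a) :
    (∀ x y₁ y₂ : ℤ,
      greenFn W.p (↑A) x y₁ + a (x - y₁) - expHit W.p (↑A) a x y₁ =
        greenFn W.p (↑A) x y₂ + a (x - y₂) - expHit W.p (↑A) a x y₂) ∧
    (∀ ξ0 ∈ A, ∀ x y : ℤ,
      greenFn W.p (↑A) x y + a (x - y) - expHit W.p (↑A) a x y =
        adag a (x - ξ0) - expHit W.p (↑A) a x ξ0) := by
  have key := fun {ξ0} (hξ0 : ξ0 ∈ A) => greenFn_add_sub_expHit_eq W.nonneg W.sum_one A ha hξ0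
  obtain ⟨ξ0, hξ0⟩ := hA
  exact ⟨fun x y₁ y₂ => (key hξ0 x y₁).trans (key hξ0 x y₂).symm,
    fun _ hξ => key hξ⟩
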